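/- Let p, q ∈ ℚ∞ both of type 0 (i.e. t(p) = t(q) = 0). Then for all x, y ∈ H: ⟨v_p^x, v_q^y⟩ = ⟨v₀^x, v₀^y⟩ - (a(p)·b(q) - a(q)·b(p))/2 (note that a(p)·b(q) - a(q)·b(p) is even in this situation). -/
import Mathlib


open Matrix

abbrev V6 := Fin 6 → ℤ

def C6 : Matrix (Fin 6) (Fin 6) ℤ :=
  !![1,0,-1,-1,1,1;
     0,1,-1,-1,1,1;
     0,0,1,0,-1,-1;
     0,0,0,1,-1,-1;
     0,0,0,0,1,0;
     0,0,0,0,0,1]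

/-- The bilinear form `⟨x,y⟩ = xᵀ C y` on `ℤ^6`. -/
def form (x y : V6) : ℤ := x ⬝ᵥ C6.mulVec y

/-- The quaternion `i`. -/
def qI : Quaternion ℤ := ⟨0,1,0,0⟩
/-- The quaternion `j`. -/
def qJ : Quaternion ℤ := ⟨0,0,1,0⟩
/-- The quaternion `k`. -/
def qK : Quaternion ℤ := ⟨0,0,0,1⟩

instance : DecidableEq (Quaternion ℤ) := fun x y =>
  decidable_of_iff (x.re = y.re ∧ x.imI = y.imI ∧ x.imJ = y.imJ ∧ x.imK = y.imK)
    ⟨fun ⟨h1, h2, h3, h4⟩ => QuaternionAlgebra.ext h1 h2 h3 h4,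
     fun h => by subst h; exact ⟨rfl, rfl, rfl, rfl⟩⟩

/-- The quaternion group `H = {±1, ±i, ±j, ±k}`. -/
def Hset : Finset (Quaternion ℤ) := {1, -1, qI, -qI, qJ, -qJ, qK, -qK}

/-- The subset `H⁺ = {1, i, j, k}`. -/
def Hplus : Finset (Quaternion ℤ) := {1, qI, qJ, qK}

/-- Index type for the three special slopes `0`, `1`, `∞`. -/
inductive Ty | zero | one | inf
deriving DecidableEq

def h0 : V6 := ![0,0,1,1,1,1]
def h1 : V6 := ![1,1,2,2,1,1]
def hinf : V6 := ![1,1,1,1,0,0]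

def hTy : Ty → V6
  | .zero => h0
  | .one => h1
  | .inf => hinf

/-- The vectors `v_t^x` for `t ∈ {0,1,∞}` and `x ∈ H⁺`. -/
def vposTy : Ty → Quaternion ℤ → V6
  | .zero, x => if x = 1 then ![0,0,1,0,1,0] else if x = qI then ![-1,0,0,0,0,0]
      else if x = qJ then ![0,0,1,0,0,1] else ![0,1,1,1,1,1]
  | .one, x => if x = 1 then ![1,0,1,1,1,0] else if x = qI then ![0,1,1,1,1,0]
      else if x = qJ then ![0,0,1,0,0,0] else ![1,1,2,1,1,1]
  | .inf, x => if x = 1 then ![1,0,0,1,0,0] else if x = qI then ![1,1,1,1,1,0]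
      else if x = qJ then ![0,0,0,0,0,-1] else ![1,0,1,0,0,0]

/-- The vectors `v_t^x` for `t ∈ {0,1,∞}` and `x ∈ H`, with `v_t^{-x} = h_t - v_t^x`. -/
def vTy (t : Ty) (x : Quaternion ℤ) : V6 :=
  if x ∈ Hplus then vposTy t x else hTy t - vposTy t (-x)

/-- `a(q)`: numerator, with `a(∞) = 1`. -/
def aQ : WithTop ℚ → ℤ := WithTop.recTopCoe 1 Rat.num

/-- `b(q)`: denominator, with `b(∞) = 0`. -/
def bQ : WithTop ℚ → ℤ := WithTop.recTopCoe 0 (fun x => (x.den : ℤ))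

/-- The type `t(q) ∈ {0,1,∞}` of a slope `q`. -/
def tyQ (q : WithTop ℚ) : Ty :=
  if aQ q % 2 = 0 then Ty.zero else if bQ q % 2 = 1 then Ty.one else Ty.inf

/-- `⌊n⌋₂ = n/2` for even `n` and `(n-1)/2` for odd `n`. -/
def half2 (n : ℤ) : ℤ := if Even n then n / 2 else (n - 1) / 2

/-- `h_q = b(q)·h₀ + a(q)·h_∞`. -/
def hQ (q : WithTop ℚ) : V6 := bQ q • h0 + aQ q • hinf

/-- `v_q^x = v_{t(q)}^x + ⌊b(q)⌋₂·h₀ + ⌊a(q)⌋₂·h_∞`. -/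
def vQ (q : WithTop ℚ) (x : Quaternion ℤ) : V6 :=
  vTy (tyQ q) x + half2 (bQ q) • h0 + half2 (aQ q) • hinf

/-- `rk e = ⟨e, h_∞⟩`. -/
def rk (e : V6) : ℤ := form e hinf

/-- `deg e = ⟨h₀, e⟩`. -/
def degV (e : V6) : ℤ := form h0 e

/-- `e` is positive if `rk e > 0`, or `rk e = 0` and `deg e > 0`. -/
def PosV (e : V6) : Prop := 0 < rk e ∨ (rk e = 0 ∧ 0 < degV e)

/-- `d(p,q) = |a(q)b(p) - a(p)b(q)|`. -/
def dQ (p q : WithTop ℚ) : ℤ := |aQ q * bQ p - aQ p * bQ q|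

/-- Complexity `c(p) = |a(p)| + |b(p)| + |a(p)+b(p)|`. -/
def cpx (p : WithTop ℚ) : ℤ := |aQ p| + |bQ p| + |aQ p + bQ p|


-- auxiliary lemmas to insert above stmt12

lemma ty_zero_a {q : WithTop ℚ} (h : tyQ q = Ty.zero) : aQ q % 2 = 0 := by
  unfold tyQ at h
  by_contra hc
  rw [if_neg hc] at h
  split at h <;> simp_all

lemma ty_zero_b {q : WithTop ℚ} (h : tyQ q = Ty.zero) : bQ q % 2 = 1 := by
  have ha := ty_zero_a h
  induction q using WithTop.recTopCoe with
  | top => simp [aQ] at ha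
  | coe r =>
    have hred : Nat.gcd r.num.natAbs r.den = 1 := r.reduced
    have hnum : 2 ∣ r.num.natAbs := by
      have : (2:ℤ) ∣ r.num := by
        have : aQ (r : WithTop ℚ) = r.num := rfl
        omega
      omega
    have hden : bQ (r : WithTop ℚ) = (r.den : ℤ) := rfl
    rw [hden]
    by_contra hc
    have hd2 : 2 ∣ r.den := by omega
    have : (2:ℕ) ∣ 1 := hred ▸ Nat.dvd_gcd hnum hd2
    omega

lemma form_key (v w : V6) (m n m' n' : ℤ)
    (h1 : form v h0 = 0) (h2 : form v hinf = 1)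
    (h3 : form h0 w = 0) (h4 : form hinf w = -1) :
    form (v + m • h0 + n • hinf) (w + m' • h0 + n' • hinf) =
      form v w + 2*m*n' - 2*n*m' - n + n' := by
  have c1 : form h0 h0 = 0 := by decide
  have c2 : form h0 hinf = 2 := by decide
  have c3 : form hinf h0 = -2 := by decide
  have c4 : form hinf hinf = 0 := by decide
  simp only [form] at h1 h2 h3 h4 c1 c2 c3 c4 ⊢
  simp only [Matrix.mulVec_add, Matrix.mulVec_smul, dotProduct_add, dotProduct_smul,
    add_dotProduct, smul_dotProduct, smul_eq_mul, h1, h2, h3, h4, c1, c2, c3, c4]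
  ring

lemma vTy_h0 (x : Quaternion ℤ) (hx : x ∈ Hset) : form (vTy .zero x) h0 = 0 := by
  fin_cases hx <;> decide

lemma vTy_hinf (x : Quaternion ℤ) (hx : x ∈ Hset) : form (vTy .zero x) hinf = 1 := by
  fin_cases hx <;> decide

lemma h0_vTy (x : Quaternion ℤ) (hx : x ∈ Hset) : form h0 (vTy .zero x) = 0 := by
  fin_cases hx <;> decide

lemma hinf_vTy (x : Quaternion ℤ) (hx : x ∈ Hset) : form hinf (vTy .zero x) = -1 := by
  fin_cases hx <;> decide

theorem stmt12 (p q : WithTop ℚ) (hp : tyQ p = Ty.zero) (hq : tyQ q = Ty.zero)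
    (x y : Quaternion ℤ) (hx : x ∈ Hset) (hy : y ∈ Hset) :
    form (vQ p x) (vQ q y) =
      form (vTy .zero x) (vTy .zero y) - (aQ p * bQ q - aQ q * bQ p) / 2 := by
  have hpa := ty_zero_a hp
  have hpb := ty_zero_b hp
  have hqa := ty_zero_a hq
  have hqb := ty_zero_b hq
  have Ea : aQ p = 2 * half2 (aQ p) := by
    have : half2 (aQ p) = aQ p / 2 := if_pos (Int.even_iff.mpr hpa)
    omega
  have Ea' : aQ q = 2 * half2 (aQ q) := by
    have : half2 (aQ q) = aQ q / 2 := if_pos (Int.even_iff.mpr hqa)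
    omega
  have Eb : bQ p = 2 * half2 (bQ p) + 1 := by
    have hne : ¬ Even (bQ p) := by rw [Int.even_iff]; omega
    have : half2 (bQ p) = (bQ p - 1) / 2 := if_neg hne
    omega
  have Eb' : bQ q = 2 * half2 (bQ q) + 1 := by
    have hne : ¬ Even (bQ q) := by rw [Int.even_iff]; omega
    have : half2 (bQ q) = (bQ q - 1) / 2 := if_neg hne
    omega
  rw [vQ, vQ, hp, hq,
    form_key _ _ _ _ _ _ (vTy_h0 x hx) (vTy_hinf x hx) (h0_vTy y hy) (hinf_vTy y hy)]
  set np := half2 (aQ p); set mp := half2 (bQ p)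
  set nq := half2 (aQ q); set mq := half2 (bQ q)
  rw [Ea, Eb, Ea', Eb']
  have h2 : 2 * np * (2 * mq + 1) - 2 * nq * (2 * mp + 1)
      = 2 * (np * (2 * mq + 1) - nq * (2 * mp + 1)) := by ring
  rw [h2, Int.mul_ediv_cancel_left _ two_ne_zero]
  ring
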